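/- Let k, r, a, b, m, n be integers with k ≥ 1, 0 ≤ a ≤ m, b ≤ n, kb ≥ max{0, a − kr}, and kn ≥ m − kr. Then the number of monotone lattice paths from (a,b) to (m,n) staying weakly above y = x/k − r equals the sum over i from 0 to ⌊(k(n+r)−m)/(k+1)⌋ of (−1)^i · ((k(b+r)−a+1)/(k(n+r−i)−a+1)) · C((k+1)(n−i)−a−b+kr, n−b−i) · C(k(n+r−i)−m, i). -/

import Mathlib

open Finset

/-- A monotone lattice path from `s` to `t` using unit steps `(1,0)` and `(0,1)`. -/
def MonoPath (s t : ℤ × ℤ) (P : List (ℤ × ℤ)) : Prop :=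
  P.head? = some s ∧ P.getLast? = some t ∧
  P.Chain' (fun p q => q = (p.1 + 1, p.2) ∨ q = (p.1, p.2 + 1))

/-- Integer binomial coefficient, `0` for negative lower index. -/
def IC (x j : ℤ) : ℕ := if j < 0 then 0 else x.toNat.choose j.toNat

/-- Number of monotone lattice paths from `(a,b)` to `(m,n)` staying weakly above `y = kx - r`. -/
noncomputable def NW (k r a b m n : ℤ) : ℕ :=
  Set.ncard {P : List (ℤ × ℤ) | MonoPath (a, b) (m, n) P ∧ ∀ p ∈ P, k * p.1 - r ≤ p.2}

/-- Number of monotone lattice paths from `(a,b)` to `(m,n)` staying strictly above `y = kx - r`. -/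
noncomputable def NS (k r a b m n : ℤ) : ℕ :=
  Set.ncard {P : List (ℤ × ℤ) | MonoPath (a, b) (m, n) P ∧ ∀ p ∈ P, k * p.1 - r < p.2}

/-- Number of monotone lattice paths from `(a,b)` to `(m,n)` staying weakly above `y = x/k - r`. -/
noncomputable def NWinv (k r a b m n : ℤ) : ℕ :=
  Set.ncard {P : List (ℤ × ℤ) | MonoPath (a, b) (m, n) P ∧ ∀ p ∈ P, p.1 - k * r ≤ k * p.2}

/-!
Both sides satisfy the same recursion `N(a, b) = N(a + 1, b) + N(a, b + 1)` inside the region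
and agree on its boundary, so they agree by induction on `(m - a) + (n - b)`.

With `u = k(b + r) - a + 1`, the `i`-th summand is `(-1)^i R(u, n - b - i) C(k(n + r - i) - m, i)`,
where `R(u, s) = u / (u + ks) C(u + (k + 1)s - 1, s)` is a Raney number. Pascal's rule and
`s C(x, s) = (x - s + 1) C(x, s - 1)` give `R(u, s) = R(u - 1, s) + R(u + k, s - 1)`, which is the
recursion termwise. On the top row `b = n` only `i = 0` survives and the sum is `1`. On the column
`a = m + 1`, which no path reaches, a factorial identity turns the sum into
`(u / s) Σ (-1)^i C(s, i) C(u - 1 + (k + 1)(s - i), s - 1)`, the `s`-th finite difference of a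
polynomial of degree `s - 1`, hence `0`.
-/

section LatticePaths

variable {s t : ℤ × ℤ} {P : List (ℤ × ℤ)}

lemma MonoPath.ne_nil (h : MonoPath s t P) : P ≠ [] := by
  rintro rfl
  simp [MonoPath] at h

lemma monoPath_cons_iff {p : ℤ × ℤ} {Q : List (ℤ × ℤ)} :
    MonoPath s t (p :: Q) ↔ p = s ∧
      (Q = [] ∧ s = t ∨ MonoPath (s.1 + 1, s.2) t Q ∨ MonoPath (s.1, s.2 + 1) t Q) := by
  constructor
  · rintro ⟨hs, ht, hc⟩
    obtain rfl : p = s := Option.some_injective _ hs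
    cases Q with
    | nil => exact ⟨rfl, .inl ⟨rfl, Option.some_injective _ ht⟩⟩
    | cons q Q =>
      obtain ⟨rfl | rfl, hc⟩ := List.isChain_cons_cons.mp hc
      · exact ⟨rfl, .inr (.inl ⟨rfl, ht, hc⟩)⟩
      · exact ⟨rfl, .inr (.inr ⟨rfl, ht, hc⟩)⟩
  · rintro ⟨rfl, ⟨rfl, rfl⟩ | hQ | hQ⟩
    · exact ⟨rfl, rfl, .singleton _⟩
    all_goals
      obtain ⟨q, Q, rfl⟩ := List.exists_cons_of_ne_nil hQ.ne_nil
      obtain ⟨hq, ht, hc⟩ := hQ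
      cases Option.some_injective _ hq
      exact ⟨rfl, ht, List.isChain_cons_cons.mpr ⟨by simp, hc⟩⟩

lemma MonoPath.le (h : MonoPath s t P) : s.1 ≤ t.1 ∧ s.2 ≤ t.2 := by
  induction P generalizing s with
  | nil => exact absurd rfl h.ne_nil
  | cons p Q ih =>
    obtain ⟨-, ⟨-, rfl⟩ | hQ | hQ⟩ := monoPath_cons_iff.mp h
    · exact ⟨le_rfl, le_rfl⟩
    all_goals have := ih hQ; dsimp only at this; omega

lemma MonoPath.eq_singleton (h : MonoPath s s P) : P = [s] := by
  obtain ⟨p, Q, rfl⟩ := List.exists_cons_of_ne_nil h.ne_nil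
  obtain ⟨rfl, ⟨rfl, -⟩ | hQ | hQ⟩ := monoPath_cons_iff.mp h
  · rfl
  all_goals have := hQ.le; dsimp only at this; omega

lemma monoPath_iff_of_ne (hst : s ≠ t) : MonoPath s t P ↔
    ∃ Q, P = s :: Q ∧ (MonoPath (s.1 + 1, s.2) t Q ∨ MonoPath (s.1, s.2 + 1) t Q) := by
  constructor
  · intro h
    obtain ⟨p, Q, rfl⟩ := List.exists_cons_of_ne_nil h.ne_nil
    obtain ⟨rfl, ⟨-, hst'⟩ | hQ⟩ := monoPath_cons_iff.mp h
    · exact absurd hst' hst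
    · exact ⟨Q, rfl, hQ⟩
  · rintro ⟨Q, rfl, hQ⟩
    exact monoPath_cons_iff.mpr ⟨rfl, .inr hQ⟩

lemma setOf_monoPath_finite (s t : ℤ × ℤ) : {P | MonoPath s t P}.Finite := by
  induction hd : (t.1 - s.1 + (t.2 - s.2)).toNat generalizing s with
  | zero =>
    by_cases hst : s = t
    · subst hst
      exact (Set.finite_singleton [s]).subset fun P hP => MonoPath.eq_singleton hP
    · convert Set.finite_empty
      refine Set.eq_empty_of_forall_notMem fun P hP => hst ?_
      have := MonoPath.le hP
      ext <;> omega
  | succ d ih =>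
    have hst : s ≠ t := by rintro rfl; simp at hd
    have : {P | MonoPath s t P} ⊆
        List.cons s '' ({Q | MonoPath (s.1 + 1, s.2) t Q} ∪
          {Q | MonoPath (s.1, s.2 + 1) t Q}) := by
      intro P hP
      obtain ⟨Q, rfl, hQ⟩ := (monoPath_iff_of_ne hst).mp hP
      exact ⟨Q, hQ, rfl⟩
    refine (Set.Finite.image _ (.union ?_ ?_)).subset this
    all_goals exact ih _ (by omega)

noncomputable def pathCount (good : ℤ × ℤ → Prop) (s t : ℤ × ℤ) : ℕ :=
  Set.ncard {P | MonoPath s t P ∧ ∀ p ∈ P, good p}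

variable {good : ℤ × ℤ → Prop}

lemma pathCount_self (h : good t) : pathCount good t t = 1 := by
  rw [pathCount, Set.ncard_eq_one]
  exact ⟨[t], Set.eq_singleton_iff_unique_mem.mpr
    ⟨⟨⟨rfl, rfl, .singleton _⟩, by simpa⟩, fun P hP => hP.1.eq_singleton⟩⟩

lemma pathCount_eq_zero_of_not_le (h : ¬ (s.1 ≤ t.1 ∧ s.2 ≤ t.2)) :
    pathCount good s t = 0 := by
  rw [pathCount]
  convert Set.ncard_empty (List (ℤ × ℤ))
  exact Set.eq_empty_of_forall_notMem fun P hP => h hP.1.le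

lemma pathCount_eq_zero_of_not_good (h : ¬ good s) : pathCount good s t = 0 := by
  rw [pathCount]
  convert Set.ncard_empty (List (ℤ × ℤ))
  refine Set.eq_empty_of_forall_notMem fun P ⟨hP, hgood⟩ => h (hgood s ?_)
  obtain ⟨p, Q, rfl⟩ := List.exists_cons_of_ne_nil hP.ne_nil
  obtain ⟨rfl, -⟩ := monoPath_cons_iff.mp hP
  exact List.mem_cons_self

lemma pathCount_step (hst : s ≠ t) (hs : good s) :
    pathCount good s t = pathCount good (s.1 + 1, s.2) t + pathCount good (s.1, s.2 + 1) t := by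
  have hsplit : {P | MonoPath s t P ∧ ∀ p ∈ P, good p} = List.cons s ''
      ({Q | MonoPath (s.1 + 1, s.2) t Q ∧ ∀ p ∈ Q, good p} ∪
        {Q | MonoPath (s.1, s.2 + 1) t Q ∧ ∀ p ∈ Q, good p}) := by
    ext P
    simp only [monoPath_iff_of_ne hst, Set.mem_ofPred_eq, Set.mem_image, Set.mem_union]
    constructor
    · rintro ⟨⟨Q, rfl, hQ⟩, hgood⟩
      have hgood' : ∀ p ∈ Q, good p := fun p hp => hgood p (List.mem_cons_of_mem _ hp)
      exact ⟨Q, hQ.imp (⟨·, hgood'⟩) (⟨·, hgood'⟩), rfl⟩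
    · rintro ⟨Q, hQ, rfl⟩
      refine ⟨⟨Q, rfl, hQ.imp And.left And.left⟩, ?_⟩
      simp only [List.mem_cons, forall_eq_or_imp]
      exact ⟨hs, hQ.elim And.right And.right⟩
  have hdisj : Disjoint {Q | MonoPath (s.1 + 1, s.2) t Q ∧ ∀ p ∈ Q, good p}
      {Q | MonoPath (s.1, s.2 + 1) t Q ∧ ∀ p ∈ Q, good p} := by
    refine Set.disjoint_left.mpr fun Q ⟨h₁, _⟩ ⟨h₂, _⟩ => ?_
    obtain ⟨q, Q, rfl⟩ := List.exists_cons_of_ne_nil h₁.ne_nil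
    have := (monoPath_cons_iff.mp h₁).1.symm.trans (monoPath_cons_iff.mp h₂).1
    simp [Prod.ext_iff] at this
  rw [pathCount, hsplit, Set.ncard_image_of_injective _ List.cons_injective,
    Set.ncard_union_eq hdisj ((setOf_monoPath_finite _ _).subset fun _ h => h.1)
      ((setOf_monoPath_finite _ _).subset fun _ h => h.1)]
  rfl

end LatticePaths

section Binomial

variable {x j : ℤ}

lemma IC_of_neg (h : j < 0) : IC x j = 0 := if_pos h

lemma IC_zero_right (x : ℤ) : IC x 0 = 1 := by simp [IC]

lemma IC_natCast (x j : ℕ) : IC x j = x.choose j := by simp [IC]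

lemma IC_of_lt (h : x < j) (hj : 0 < j) : IC x j = 0 := by
  rw [IC, if_neg (by omega), Nat.choose_eq_zero_of_lt (by omega)]

lemma IC_add_one (hx : 0 ≤ x) (j : ℤ) : IC (x + 1) j = IC x (j - 1) + IC x j := by
  rcases lt_trichotomy j 0 with hj | rfl | hj
  · rw [IC_of_neg hj, IC_of_neg hj, IC_of_neg (by omega)]
  · rw [IC_zero_right, IC_zero_right, IC_of_neg (by omega)]
  · lift x to ℕ using hx
    obtain ⟨j, rfl⟩ : ∃ j' : ℕ, j = j' + 1 := ⟨(j - 1).toNat, by omega⟩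
    have h := IC_natCast (x + 1) (j + 1)
    have h' := IC_natCast x (j + 1)
    push_cast at h h'
    rw [add_sub_cancel_right, IC_natCast, h, h', Nat.choose_succ_succ]

lemma mul_IC (hx : 0 ≤ x) (j : ℤ) : j * IC x j = (x - j + 1) * IC x (j - 1) := by
  rcases lt_trichotomy j 0 with hj | rfl | hj
  · rw [IC_of_neg hj, IC_of_neg (by omega)]; simp
  · rw [zero_sub, IC_of_neg neg_one_lt_zero]; simp
  · lift x to ℕ using hx
    obtain ⟨j, rfl⟩ : ∃ j' : ℕ, j = j' + 1 := ⟨(j - 1).toNat, by omega⟩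
    have h := IC_natCast x (j + 1)
    push_cast at h
    rw [add_sub_cancel_right, IC_natCast, h]
    rcases le_or_gt j x with hjx | hjx
    · have := Nat.choose_succ_right_eq x j
      zify [hjx] at this
      linear_combination this
    · rw [Nat.choose_eq_zero_of_lt hjx, Nat.choose_eq_zero_of_lt (by omega)]
      simp

end Binomial

lemma add_one_mul_choose_mul_choose (M d i e : ℕ) (h : i + d = e + 1) :
    (e + 1) * (M + d).choose d * (M + 1).choose i
      = (M + 1) * (e + 1).choose i * (M + d).choose e := by
  by_cases hi : i ≤ M + 1
  · have key : ((e + 1 : ℕ) : ℚ) * (M + d).choose d * (M + 1).choose i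
        = ((M + 1 : ℕ) : ℚ) * (e + 1).choose i * (M + d).choose e := by
      rw [Nat.cast_choose ℚ (Nat.le_add_left d M), Nat.cast_choose ℚ hi,
        Nat.cast_choose ℚ (by omega : i ≤ e + 1), Nat.cast_choose ℚ (by omega : e ≤ M + d),
        Nat.add_sub_cancel, show e + 1 - i = d by omega, show M + d - e = M + 1 - i by omega,
        Nat.factorial_succ M, Nat.factorial_succ e]
      push_cast
      field_simp
    exact_mod_cast key
  · rw [Nat.choose_eq_zero_of_lt (not_le.mp hi), Nat.choose_eq_zero_of_lt (by omega : M + d < e)]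
    simp

open Polynomial in
lemma exists_natDegree_le_eval_eq_choose (c d j : ℕ) :
    ∃ P : ℚ[X], P.natDegree ≤ j ∧ ∀ x : ℕ, P.eval (x : ℚ) = (c + d * x).choose j := by
  refine ⟨C (j.factorial : ℚ)⁻¹ * (descPochhammer ℚ j).comp (C (d : ℚ) * X + C (c : ℚ)),
    ?_, fun x => ?_⟩
  · calc _ ≤ (descPochhammer ℚ j).natDegree * (C (d : ℚ) * X + C (c : ℚ)).natDegree :=
          (natDegree_C_mul_le _ _).trans natDegree_comp_le
      _ ≤ j * 1 := by
          rw [descPochhammer_natDegree]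
          exact Nat.mul_le_mul_left _ natDegree_linear_le
      _ = j := mul_one j
  · have h := descPochhammer_eval_eq_descFactorial ℚ (c + d * x) j
    push_cast at h
    simp only [eval_mul, eval_C, eval_comp, eval_add, eval_X]
    rw [add_comm, h, Nat.descFactorial_eq_factorial_mul_choose, Nat.cast_mul]
    field_simp

open Polynomial in
lemma sum_range_alternating_mul_eval_eq_zero {R : Type*} [CommRing R] {P : R[X]} {s : ℕ}
    (hP : P.natDegree < s) :
    ∑ j ∈ range (s + 1), (-1) ^ (s - j) * s.choose j * P.eval (j : R) = 0 := by
  have h := congr_fun (fwdDiff_iter_eq_zero_of_degree_lt hP) 0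
  rw [fwdDiff_iter_eq_sum_shift] at h
  simpa [zsmul_eq_mul] using h

lemma sum_alternating_choose_mul_choose_eq_zero (c d s : ℕ) (hs : 0 < s) :
    ∑ i ∈ range (s + 1), (-1 : ℚ) ^ i * s.choose i * (c + d * (s - i)).choose (s - 1)
      = 0 := by
  obtain ⟨P, hdeg, hP⟩ := exists_natDegree_le_eval_eq_choose c d (s - 1)
  rw [← sum_range_alternating_mul_eval_eq_zero (hdeg.trans_lt (Nat.sub_lt hs one_pos)),
    ← sum_range_reflect]
  refine sum_congr rfl fun j hj => ?_
  have hj : j ≤ s := Nat.lt_succ_iff.mp (mem_range.mp hj)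
  rw [hP, add_tsub_cancel_right, Nat.sub_sub_self hj, Nat.choose_symm hj]

def raney (k u s : ℤ) : ℚ := u / (u + k * s) * IC (u + (k + 1) * s - 1) s

section Raney

variable {k u s : ℤ}

lemma raney_zero_left (k s : ℤ) : raney k 0 s = 0 := by simp [raney]

lemma raney_of_neg (hs : s < 0) : raney k u s = 0 := by simp [raney, IC_of_neg hs]

lemma raney_zero_right (hu : u ≠ 0) : raney k u 0 = 1 := by
  simp [raney, IC_zero_right, hu]

lemma raney_eq_add (hk : 0 < k) (hu : 0 < u) (h : (u, s) ≠ (1, 0)) :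
    raney k u s = raney k (u - 1) s + raney k (u + k) (s - 1) := by
  rcases lt_trichotomy s 0 with hs | rfl | hs
  · rw [raney_of_neg hs, raney_of_neg hs, raney_of_neg (by omega), add_zero]
  · have hu1 : u - 1 ≠ 0 := fun h' => h (by simp; omega)
    rw [raney_zero_right hu.ne', raney_zero_right hu1, raney_of_neg (by omega), add_zero]
  · have hX : 0 ≤ u + (k + 1) * s - 2 := by nlinarith
    have hpascal := IC_add_one hX s
    have habs := mul_IC hX s
    rw [show u + (k + 1) * s - 2 + 1 = u + (k + 1) * s - 1 by ring] at hpascal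
    rw [show u + (k + 1) * s - 2 - s + 1 = u + k * s - 1 by ring] at habs
    unfold raney
    rw [hpascal, show u - 1 + (k + 1) * s - 1 = u + (k + 1) * s - 2 by ring,
      show u + k + (k + 1) * (s - 1) - 1 = u + (k + 1) * s - 2 by ring]
    have hD : (0 : ℚ) < u - 1 + k * s := by
      have : 1 ≤ k * s := one_le_mul_of_one_le_of_one_le hk hs
      exact_mod_cast (by omega : (0 : ℤ) < u - 1 + k * s)
    have habsq : (s : ℚ) * IC (u + (k + 1) * s - 2) s
        = (u + k * s - 1) * IC (u + (k + 1) * s - 2) (s - 1) := by exact_mod_cast habs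
    have hD' : (u : ℚ) + k * s ≠ 0 := by linarith
    push_cast
    rw [show (u + k : ℚ) + k * (s - 1) = u + k * s by ring]
    field_simp
    linear_combination (k : ℚ) * habsq

end Raney

lemma raney_mul_IC (k v s i : ℕ) (hs : 0 < s) :
    raney k (v + 1) (s - i) * IC (v + 1 + k * (s - i)) i
      = (v + 1) / s * s.choose i * (v + (k + 1) * (s - i)).choose (s - 1) := by
  rcases le_or_gt i s with hi | hi
  · obtain ⟨d, rfl⟩ := Nat.exists_eq_add_of_le hi
    obtain ⟨e, he⟩ : ∃ e, i + d = e + 1 := ⟨i + d - 1, by omega⟩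
    have hraney : raney k (v + 1) d = (v + 1) / (v + k * d + 1) * (v + k * d + d).choose d := by
      have h := IC_natCast (v + k * d + d) d
      push_cast at h
      rw [raney, show (v : ℤ) + 1 + (k + 1) * d - 1 = v + k * d + d by ring, h]
      push_cast
      ring_nf
    have hIC := IC_natCast (v + k * d + 1) i
    push_cast at hIC
    have key : ((e + 1 : ℕ) : ℚ) * (v + k * d + d).choose d * (v + k * d + 1).choose i
        = ((v + k * d + 1 : ℕ) : ℚ) * (e + 1).choose i * (v + k * d + d).choose e := by
      exact_mod_cast add_one_mul_choose_mul_choose (v + k * d) d i e he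
    rw [Nat.cast_add, add_sub_cancel_left, hraney,
      show v + 1 + k * (d : ℤ) = v + k * d + 1 by ring, hIC, Nat.add_sub_cancel_left,
      show v + (k + 1) * d = v + k * d + d by ring, he, Nat.add_sub_cancel]
    push_cast at key ⊢
    field_simp
    linear_combination key
  · rw [raney_of_neg (by omega), Nat.choose_eq_zero_of_lt hi]
    simp

lemma sum_range_raney_mul_IC_eq_zero (k v s L : ℕ) (hs : 0 < s)
    (hL : v + 1 + k * s < (k + 1) * (L + 1)) :
    ∑ i ∈ range (L + 1), (-1 : ℚ) ^ i * raney k (v + 1) (s - i) * IC (v + 1 + k * (s - i)) i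
      = 0 := by
  set g : ℕ → ℚ := fun i => (-1) ^ i * s.choose i * (v + (k + 1) * (s - i)).choose (s - 1)
  have hg_s : ∀ i ≥ s + 1, g i = 0 := fun i hi => by
    simp [g, Nat.choose_eq_zero_of_lt (Nat.lt_of_succ_le hi)]
  have hg_L : ∀ i ≥ L + 1, g i = 0 := fun i hi => by
    rcases le_or_gt i s with his | his
    · have h1 : (k + 1) * (L + 1) ≤ (k + 1) * i := Nat.mul_le_mul_left _ hi
      have h2 : (k + 1) * (s - i) = (k + 1) * s - (k + 1) * i := Nat.mul_sub_left_distrib _ _ _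
      have h3 : (k + 1) * s = k * s + s := by ring
      have h4 : (k + 1) * i ≤ (k + 1) * s := Nat.mul_le_mul_left _ his
      simp only [g]
      rw [Nat.choose_eq_zero_of_lt (by omega : v + (k + 1) * (s - i) < s - 1)]
      simp
    · exact hg_s i his
  calc _ = (v + 1) / s * ∑ i ∈ range (L + 1), g i := by
        rw [mul_sum]
        refine sum_congr rfl fun i _ => ?_
        rw [mul_assoc, raney_mul_IC k v s i hs]
        ring
    _ = (v + 1) / s * ∑ i ∈ range (s + 1), g i := by
        rw [← eventually_constant_sum hg_L (Nat.le_add_right _ (s + 1)),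
          eventually_constant_sum hg_s (Nat.le_add_left _ (L + 1))]
    _ = 0 := by
        rw [sum_alternating_choose_mul_choose_eq_zero v (k + 1) s hs, mul_zero]

section RaneySum

variable (k r m n : ℤ)

def raneySum (a b : ℤ) : ℚ :=
  ∑ i ∈ range (((k * (n + r) - m) / (k + 1)).toNat + 1),
    (-1) ^ i * raney k (k * (b + r) - a + 1) (n - b - i) * IC (k * (n + r - i) - m) i

variable {k r m n} {a b : ℤ}

lemma raneySum_of_lt (h : n < b) : raneySum k r m n a b = 0 :=
  sum_eq_zero fun i _ => by rw [raney_of_neg (by omega), mul_zero, zero_mul]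

lemma raneySum_of_eq (h : a = k * (b + r) + 1) : raneySum k r m n a b = 0 :=
  sum_eq_zero fun i _ => by
    rw [h, show k * (b + r) - (k * (b + r) + 1) + 1 = 0 by ring, raney_zero_left, mul_zero,
      zero_mul]

lemma raneySum_top (h : a ≤ k * (n + r)) : raneySum k r m n a n = 1 := by
  rw [raneySum, sum_range_succ', sum_eq_zero fun i _ => by rw [raney_of_neg (by omega)]; simp]
  simp [raney_zero_right (by omega : k * (n + r) - a + 1 ≠ 0), IC_zero_right]

lemma raneySum_add (hk : 0 < k) (ham : a ≤ m) (hbn : b ≤ n) (hne : (a, b) ≠ (m, n))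
    (hu : a ≤ k * (b + r)) (hmn : m ≤ k * (n + r)) :
    raneySum k r m n a b = raneySum k r m n (a + 1) b + raneySum k r m n a (b + 1) := by
  rcases hbn.lt_or_eq with hbn | rfl
  · rw [raneySum, raneySum, raneySum, ← sum_add_distrib]
    refine sum_congr rfl fun i _ => ?_
    by_cases hedge : a = k * (b + r) ∧ (i : ℤ) = n - b
    · -- the exceptional case `(u, s) = (1, 0)` of `raney_eq_add`, where `C(a - m, i)` vanishes
      have hE : IC (k * (n + r - i) - m) i = 0 := by
        rw [show n + r - i = b + r by omega]
        exact IC_of_lt (by omega) (by omega)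
      simp [hE]
    · rw [raney_eq_add hk (by omega) (by simp only [ne_eq, Prod.mk.injEq]; omega),
        show k * (b + r) - (a + 1) + 1 = k * (b + r) - a + 1 - 1 by ring,
        show k * (b + 1 + r) - a + 1 = k * (b + r) - a + 1 + k by ring,
        show n - (b + 1) - i = n - b - i - 1 by ring]
      ring
  · have ham : a < m := lt_of_le_of_ne ham fun h => hne (by rw [h])
    rw [raneySum_top hu, raneySum_top (by omega), raneySum_of_lt (by omega), add_zero]

lemma raneySum_right_eq_zero (hk : 0 < k) (hbn : b < n) (hu : m ≤ k * (b + r)) :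
    raneySum k r m n (m + 1) b = 0 := by
  lift k to ℕ using hk.le
  obtain ⟨s, hs⟩ : ∃ s : ℕ, n - b = s := ⟨(n - b).toNat, by omega⟩
  obtain ⟨u, hu⟩ : ∃ u : ℕ, k * (b + r) - m = u := ⟨(k * (b + r) - m).toNat, by omega⟩
  rcases u with _ | v
  · exact raneySum_of_eq (by push_cast at hu; omega)
  push_cast at hu
  have htop : (k : ℤ) * (n + r) - m = v + 1 + k * s := by linear_combination hu + (k : ℤ) * hs
  set L := (((k : ℤ) * (n + r) - m) / (k + 1)).toNat with hL
  have hLlt : v + 1 + k * s < (k + 1) * (L + 1) := by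
    have h := Int.lt_ediv_add_one_mul_self ((k : ℤ) * (n + r) - m) (by omega : (0 : ℤ) < k + 1)
    have hLz : (L : ℤ) = ((k : ℤ) * (n + r) - m) / (k + 1) :=
      Int.toNat_of_nonneg (Int.ediv_nonneg (by rw [htop]; positivity) (by omega))
    zify
    rw [hLz, ← htop]
    linarith
  rw [raneySum, ← hL, ← sum_range_raney_mul_IC_eq_zero k v s L (by omega) hLlt]
  refine sum_congr rfl fun i _ => ?_
  rw [show (k : ℤ) * (b + r) - (m + 1) + 1 = v + 1 by omega,
    show n - b - i = s - i by omega,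
    show (k : ℤ) * (n + r - i) - m = v + 1 + k * (s - i) by linear_combination htop]

end RaneySum

lemma pathCount_eq_raneySum {k r m n : ℤ} (hk : 0 < k) (hmn : m - k * r ≤ k * n) (a b : ℤ)
    (ham : a ≤ m) (hbn : b ≤ n) (hab : a - k * r ≤ k * b) :
    (pathCount (fun p => p.1 - k * r ≤ k * p.2) (a, b) (m, n) : ℚ) = raneySum k r m n a b := by
  have hkn : k * (n + r) = k * n + k * r := by ring
  induction hd : (m - a + (n - b)).toNat generalizing a b with
  | zero =>
    obtain ⟨rfl, rfl⟩ : a = m ∧ b = n := by omega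
    rw [pathCount_self hab, raneySum_top (by omega), Nat.cast_one]
  | succ d ih =>
    have hkb : k * (b + r) = k * b + k * r := by ring
    have hne : (a, b) ≠ (m, n) := by
      rintro ⟨⟩
      simp at hd
    rw [pathCount_step hne hab, Nat.cast_add,
      raneySum_add hk ham hbn hne (by omega) (by omega)]
    congr 1
    · rcases ham.lt_or_eq with ham | rfl
      · by_cases hgood : a + 1 - k * r ≤ k * b
        · exact ih (a + 1) b (by omega) hbn hgood (by omega)
        · rw [pathCount_eq_zero_of_not_good (s := (a + 1, b)) hgood, raneySum_of_eq (by omega),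
            Nat.cast_zero]
      · have hbn : b < n := lt_of_le_of_ne hbn fun h => hne (by rw [h])
        rw [pathCount_eq_zero_of_not_le (by simp), raneySum_right_eq_zero hk hbn (by omega),
          Nat.cast_zero]
    · rcases hbn.lt_or_eq with hbn | rfl
      · exact ih a (b + 1) ham hbn (by linarith) (by omega)
      · rw [pathCount_eq_zero_of_not_le (by simp), raneySum_of_lt (by omega), Nat.cast_zero]

theorem stmt11_general (k r a b m n : ℤ) (hk : 1 ≤ k) (ham : a ≤ m) (hbn : b ≤ n)
    (hb2 : a - k * r ≤ k * b) (hn : m - k * r ≤ k * n) :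
    (NWinv k r a b m n : ℚ) =
      ∑ i ∈ Finset.range (((k * (n + r) - m) / (k + 1)).toNat + 1),
        (-1 : ℚ) ^ i *
          (((k * (b + r) - a + 1 : ℤ) : ℚ) / ((k * (n + r - (i : ℤ)) - a + 1 : ℤ) : ℚ)) *
          (IC ((k + 1) * (n - (i : ℤ)) - a - b + k * r) (n - b - (i : ℤ)) : ℚ) *
          (IC (k * (n + r - (i : ℤ)) - m) (i : ℤ) : ℚ) := by
  rw [NWinv, ← pathCount, pathCount_eq_raneySum hk hn a b ham hbn hb2]
  refine sum_congr rfl fun i _ => ?_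
  rw [raney, show k * (b + r) - a + 1 + (k + 1) * (n - b - i) - 1
    = (k + 1) * (n - i) - a - b + k * r by ring]
  push_cast
  ring

theorem stmt11 (k r a b m n : ℤ) (hk : 1 ≤ k) (ha : 0 ≤ a) (ham : a ≤ m) (hbn : b ≤ n)
    (hb1 : 0 ≤ k * b) (hb2 : a - k * r ≤ k * b) (hn : m - k * r ≤ k * n) :
    (NWinv k r a b m n : ℚ) =
      ∑ i ∈ Finset.range (((k * (n + r) - m) / (k + 1)).toNat + 1),
        (-1 : ℚ) ^ i *
          (((k * (b + r) - a + 1 : ℤ) : ℚ) / ((k * (n + r - (i : ℤ)) - a + 1 : ℤ) : ℚ)) *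
          (IC ((k + 1) * (n - (i : ℤ)) - a - b + k * r) (n - b - (i : ℤ)) : ℚ) *
          (IC (k * (n + r - (i : ℤ)) - m) (i : ℤ) : ℚ) :=
  stmt11_general k r a b m n hk ham hbn hb2 hn
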